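/- Let α > 0 and q ≥ 2, and let K ⊂ ℝⁿ be a centrally symmetric compact convex set with nonempty interior that is smooth and (α,q)-uniformly convex with respect to ‖·‖_K. Set C = (q/(2α))^{1/(q−1)}. Then ½‖·‖²_{K°} is differentiable on all of ℝⁿ with ∇½‖·‖²_{K°}(d) = ‖d‖_{K°}·∇‖·‖_{K°}(d) for d ≠ 0 and ∇½‖·‖²_{K°}(0) = 0, and for all d₁, d₂ ∈ K° \ {0}: ‖∇½‖·‖²_{K°}(d₁) − ∇½‖·‖²_{K°}(d₂)‖_K ≤ 2(C + 1)·‖d₁ − d₂‖_{K°}^{1/(q−1)}. -/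

import Mathlib

open scoped InnerProductSpace
open scoped Pointwise
open MeasureTheory

noncomputable section

abbrev Euc (n : ℕ) := EuclideanSpace ℝ (Fin n)

/-- The polar set `K° = {d | ⟪d, x⟫ ≤ 1 for all x ∈ K}`. -/
def polarSet {n : ℕ} (K : Set (Euc n)) : Set (Euc n) := {d | ∀ x ∈ K, ⟪d, x⟫_ℝ ≤ 1}

/-- The normal cone of `K` at `y`. -/
def normalCone {n : ℕ} (K : Set (Euc n)) (y : Euc n) : Set (Euc n) :=
  {d | ∀ x ∈ K, 0 ≤ ⟪d, y - x⟫_ℝ}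

/-- A set is smooth if at each boundary point there is exactly one normal direction in `∂K°`. -/
def SmoothSet {n : ℕ} (K : Set (Euc n)) : Prop :=
  ∀ x ∈ frontier K, ∃! d, d ∈ normalCone K x ∩ frontier (polarSet K)

/-- A set is strictly convex if the midpoint of two distinct boundary points is interior. -/
def StrictlyConvexSet {n : ℕ} (K : Set (Euc n)) : Prop :=
  ∀ x₁ ∈ frontier K, ∀ x₂ ∈ frontier K, x₁ ≠ x₂ → midpoint ℝ x₁ x₂ ∈ interior K

/-- `(α, q)`-uniform convexity of a set w.r.t. its gauge. -/
def UniformlyConvexSet {n : ℕ} (K : Set (Euc n)) (α q : ℝ) : Prop :=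
  ∀ x ∈ K, ∀ y ∈ K, ∀ z ∈ K, ∀ γ ∈ Set.Icc (0:ℝ) 1,
    γ • x + (1 - γ) • y + (α / q * (γ * (1 - γ)) * gauge K (x - y) ^ q) • z ∈ K

/-- The barrier function `F_K(x) = -ln(1 - ‖x‖_K) - ‖x‖_K`. -/
def FK {n : ℕ} (K : Set (Euc n)) (x : Euc n) : ℝ := -Real.log (1 - gauge K x) - gauge K x

/-- Fenchel conjugate of the barrier `F_K` (defined on `D_K = {‖x‖_K < 1}`). -/
def FstarK {n : ℕ} (K : Set (Euc n)) (d : Euc n) : ℝ :=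
  sSup ((fun x => ⟪x, d⟫_ℝ - FK K x) '' {x | gauge K x < 1})

/-- Bregman divergence `D_F(u, v) = F(u) - F(v) - ⟪∇F(v), u - v⟫`. -/
def breg {n : ℕ} (F : Euc n → ℝ) (u v : Euc n) : ℝ :=
  F u - F v - ⟪gradient F v, u - v⟫_ℝ

def l1Ball {n : ℕ} (r : ℝ) : Set (Euc n) := {x | ∑ i, |x i| ≤ r}
def linfBall {n : ℕ} (R : ℝ) : Set (Euc n) := {x | ∀ i, |x i| ≤ R}
def l2Ball {n : ℕ} (r : ℝ) : Set (Euc n) := Metric.closedBall 0 r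
def lqBall {n : ℕ} (q r : ℝ) : Set (Euc n) := {x | ∑ i, |x i| ^ q ≤ r ^ q}

/-!
The gauge of `K°` is the support function `h(d) = max_{x ∈ K} ⟪d, x⟫`.
Testing uniform convexity of `K` against a maximiser `x₁` of `⟪d₁, ·⟫` (with `z = x₁` and
`γ → 1`) gives `α/q ‖x₁ - x₂‖_K^q h(d₁) ≤ h(d₁) - ⟪d₁, x₂⟫` for every `x₂ ∈ K`. Adding this to the
same inequality with the roles of `d₁`, `d₂` exchanged yields the monotonicity estimate
`‖x₁ - x₂‖_K^(q-1) (h(d₁) + h(d₂)) ≤ q/α · h(d₁ - d₂)`. It makes the maximiser a continuous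
function of `d ≠ 0`, so `h` is differentiable there with gradient the maximiser (Danskin),
`½h²` has gradient `h(d) x(d)`, and the same estimate gives the Hölder bound for
`h(d₁) x₁ - h(d₂) x₂ = h(d₁) (x₁ - x₂) + (h(d₁) - h(d₂)) x₂`.
-/

open Filter Topology Asymptotics

protected theorem Seminorm.gauge_closedBall_one {E : Type*} [AddCommGroup E] [Module ℝ E]
    (p : Seminorm ℝ E) : gauge (p.closedBall 0 1) = p := by
  ext x
  have hball := p.ball_subset_closedBall 0 1
  have habs : Absorbent ℝ (p.ball 0 1) := p.absorbent_ball_zero one_pos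
  refine le_antisymm (by simpa using gauge_mono habs hball x) (le_of_forall_gt fun a ha => ?_)
  obtain ⟨b, hb, hba, y, hy, rfl⟩ := exists_lt_of_gauge_lt (habs.mono hball) ha
  rw [Seminorm.mem_closedBall_zero] at hy
  rw [map_smul_eq_mul, Real.norm_eq_abs, abs_of_pos hb]
  nlinarith

theorem gauge_smul_sub_smul_le {E : Type*} [AddCommGroup E] [Module ℝ E] {K : Set E}
    (hconv : Convex ℝ K) (hKabs : Absorbent ℝ K) {a b : ℝ} (hb : 0 ≤ b) (hba : b ≤ a) (x : E)
    {y : E} (hy : y ∈ K) : gauge K (a • x - b • y) ≤ (a + b) * gauge K (x - y) + (a - b) :=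
  calc gauge K (a • x - b • y) = gauge K (a • (x - y) + (a - b) • y) := by
        congr 1
        module
    _ ≤ a * gauge K (x - y) + (a - b) * gauge K y := by
        grw [gauge_add_le hconv hKabs, gauge_smul_of_nonneg (by linarith),
          gauge_smul_of_nonneg (by linarith)]
        rfl
    _ ≤ (a + b) * gauge K (x - y) + (a - b) := by
        nlinarith [gauge_le_one_of_mem hy, gauge_nonneg (s := K) (x - y)]

section SupportFunction

variable {E : Type*} [NormedAddCommGroup E] [InnerProductSpace ℝ E] {K : Set E} {d x : E}

def supportFn (K : Set E) (d : E) : ℝ := sSup ((fun x => ⟪d, x⟫_ℝ) '' K)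

theorem inner_le_supportFn (hK : IsCompact K) (hx : x ∈ K) : ⟪d, x⟫_ℝ ≤ supportFn K d :=
  le_csSup (hK.bddAbove_image (by fun_prop)) ⟨x, hx, rfl⟩

theorem supportFn_le (hne : K.Nonempty) {c : ℝ} (h : ∀ x ∈ K, ⟪d, x⟫_ℝ ≤ c) :
    supportFn K d ≤ c :=
  csSup_le (hne.image _) (by rintro _ ⟨x, hx, rfl⟩; exact h x hx)

theorem IsCompact.exists_inner_eq_supportFn (hK : IsCompact K) (hne : K.Nonempty) (d : E) :
    ∃ x ∈ K, ⟪d, x⟫_ℝ = supportFn K d := by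
  obtain ⟨x, hx, h⟩ := hK.exists_sSup_image_eq hne (f := fun x => ⟪d, x⟫_ℝ) (by fun_prop)
  exact ⟨x, hx, h.symm⟩

theorem supportFn_nonneg (hK : IsCompact K) (h0 : (0 : E) ∈ K) : 0 ≤ supportFn K d := by
  simpa using inner_le_supportFn (d := d) hK h0

theorem supportFn_pos (hK : IsCompact K) (hK0 : K ∈ 𝓝 0) (hd : d ≠ 0) : 0 < supportFn K d := by
  have hsmul : Tendsto (fun t : ℝ => t • d) (𝓝[>] 0) (𝓝 0) := tendsto_nhdsWithin_of_tendsto_nhds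
    (by simpa using (tendsto_id.smul_const d : Tendsto (fun t : ℝ => t • d) (𝓝 0) _))
  obtain ⟨t, htK, ht⟩ := ((hsmul.eventually_mem hK0).and self_mem_nhdsWithin).exists
  calc 0 < t * ‖d‖ ^ 2 := mul_pos ht (by positivity)
    _ = ⟪d, t • d⟫_ℝ := by rw [real_inner_smul_right, real_inner_self_eq_norm_sq]
    _ ≤ supportFn K d := inner_le_supportFn hK htK

theorem abs_inner_le_supportFn (hK : IsCompact K) (hsymm : ∀ x ∈ K, -x ∈ K) (hx : x ∈ K) :
    |⟪d, x⟫_ℝ| ≤ supportFn K d :=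
  abs_le'.2 ⟨inner_le_supportFn hK hx, by simpa using inner_le_supportFn (d := d) hK (hsymm x hx)⟩

def supportSeminorm (hK : IsCompact K) (hne : K.Nonempty) (hsymm : ∀ x ∈ K, -x ∈ K) :
    Seminorm ℝ E :=
  Seminorm.ofSMulLE (supportFn K)
    (le_antisymm (supportFn_le hne fun x _ => (inner_zero_left x).le)
      (by obtain ⟨x, hx⟩ := hne; simpa using inner_le_supportFn (d := 0) hK hx))
    (fun d₁ d₂ => supportFn_le hne fun x hx => by
      rw [inner_add_left]
      exact add_le_add (inner_le_supportFn hK hx) (inner_le_supportFn hK hx))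
    (fun r d => supportFn_le hne fun x hx => by
      rw [real_inner_smul_left, Real.norm_eq_abs]
      exact (le_abs_self _).trans (abs_mul r _ ▸
        mul_le_mul_of_nonneg_left (abs_inner_le_supportFn hK hsymm hx) (abs_nonneg r)))

@[simp]
theorem coe_supportSeminorm (hK : IsCompact K) (hne : K.Nonempty) (hsymm : ∀ x ∈ K, -x ∈ K) :
    ⇑(supportSeminorm hK hne hsymm) = supportFn K :=
  rfl

theorem IsCompact.supportFn_isBigO (hK : IsCompact K) (hne : K.Nonempty) (l : Filter E) :
    supportFn K =O[l] fun d => d := by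
  obtain ⟨R, hR⟩ := hK.isBounded.subset_closedBall 0
  have hnorm : ∀ x ∈ K, ‖x‖ ≤ R := fun x hx => by simpa using hR hx
  obtain ⟨x₀, hx₀⟩ := hne
  refine IsBigO.of_bound R (Eventually.of_forall fun d => ?_)
  rw [Real.norm_eq_abs, abs_le]
  constructor
  · nlinarith [neg_le_of_abs_le (abs_real_inner_le_norm d x₀), inner_le_supportFn (d := d) hK hx₀,
      hnorm x₀ hx₀, norm_nonneg d]
  · exact supportFn_le ⟨x₀, hx₀⟩ fun x hx =>
      (real_inner_le_norm d x).trans (by nlinarith [hnorm x hx, norm_nonneg d])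

theorem inner_le_supportFn_mul_gauge (hK : IsCompact K) (hKabs : Absorbent ℝ K) (d x : E) :
    ⟪d, x⟫_ℝ ≤ supportFn K d * gauge K x := by
  have hh := supportFn_nonneg (d := d) hK hKabs.zero_mem
  have hlt : ∀ᶠ a in 𝓝[>] gauge K x, ⟪d, x⟫_ℝ ≤ supportFn K d * a := by
    filter_upwards [self_mem_nhdsWithin] with a ha
    obtain ⟨b, hb, hba, y, hy, rfl⟩ := exists_lt_of_gauge_lt hKabs ha
    rw [real_inner_smul_right]
    nlinarith [inner_le_supportFn (d := d) hK hy]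
  exact ge_of_tendsto (tendsto_nhdsWithin_of_tendsto_nhds
    ((continuous_const.mul continuous_id).tendsto (gauge K x))) hlt

theorem Convex.zero_mem_interior_of_neg_mem (hconv : Convex ℝ K) (hsymm : ∀ x ∈ K, -x ∈ K)
    (hint : (interior K).Nonempty) : (0 : E) ∈ interior K := by
  obtain ⟨x, hx⟩ := hint
  have hneg : -x ∈ interior K :=
    interior_maximal (fun y hy => by simpa using hsymm _ (interior_subset hy)) isOpen_interior.neg
      (by simpa using hx)
  simpa using hconv.interior hx hneg (by norm_num : (0 : ℝ) ≤ 1 / 2) (by norm_num : (0 : ℝ) ≤ 1 / 2)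
    (by norm_num)

theorem hasGradientAt_supportFn [CompleteSpace E] {σ : E → E} (hK : IsCompact K)
    (hσK : ∀ e, σ e ∈ K) (hσ : ∀ e, ⟪e, σ e⟫_ℝ = supportFn K e) (hcont : ContinuousAt σ d) :
    HasGradientAt (supportFn K) (σ d) d := by
  rw [hasGradientAt_iff_hasFDerivAt, hasFDerivAt_iff_isLittleO]
  refine isLittleO_iff.2 fun c hc => ?_
  filter_upwards [hcont (Metric.closedBall_mem_nhds (σ d) hc)] with e hclose
  have hd : ⟪σ d, e - d⟫_ℝ = ⟪e, σ d⟫_ℝ - supportFn K d := by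
    rw [inner_sub_right, real_inner_comm e, real_inner_comm d, hσ d]
  have he : ⟪σ e, e - d⟫_ℝ = supportFn K e - ⟪d, σ e⟫_ℝ := by
    rw [inner_sub_right, real_inner_comm e, real_inner_comm d, hσ e]
  have hde := inner_le_supportFn (d := e) hK (hσK d)
  have hed := inner_le_supportFn (d := d) hK (hσK e)
  rw [InnerProductSpace.toDual_apply_apply, Real.norm_eq_abs, abs_of_nonneg (by linarith)]
  calc _ ≤ ⟪σ e - σ d, e - d⟫_ℝ := by rw [inner_sub_left]; linarith
    _ ≤ ‖σ e - σ d‖ * ‖e - d‖ := real_inner_le_norm _ _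
    _ ≤ c * ‖e - d‖ := by gcongr; simpa [dist_eq_norm] using hclose

end SupportFunction

section HalfSquare

variable {E : Type*} [NormedAddCommGroup E] [InnerProductSpace ℝ E] [CompleteSpace E]
  {f : E → ℝ}

theorem HasGradientAt.sq_div_two {g x : E} (hf : HasGradientAt f g x) :
    HasGradientAt (fun y => f y ^ 2 / 2) (f x • g) x := by
  rw [hasGradientAt_iff_hasFDerivAt] at hf ⊢
  refine (((hasDerivAt_pow 2 (f x)).div_const 2).comp_hasFDerivAt x hf).congr_fderiv ?_
  ext v
  simp [InnerProductSpace.toDual_apply_apply]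

theorem hasGradientAt_sq_div_two_zero (hf : f =O[𝓝 0] fun x => x) :
    HasGradientAt (fun y => f y ^ 2 / 2) 0 0 := by
  have hf0 : f 0 = 0 := hf.eq_zero_imp.self_of_nhds rfl
  have hsmall : f =o[𝓝 0] fun _ => (1 : ℝ) :=
    (isLittleO_one_iff ℝ).2 (hf.trans_tendsto tendsto_id)
  rw [hasGradientAt_iff_hasFDerivAt, hasFDerivAt_iff_isLittleO]
  refine IsLittleO.of_norm_right (((hsmall.mul_isBigO hf.norm_right).const_mul_left (1 / 2)).congr
    (fun y => ?_) (fun y => ?_))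
  · simp [hf0]
    ring
  · simp

end HalfSquare

theorem mul_le_two_mul_rpow_inv {s N c t : ℝ} (ht : 1 ≤ t) (hs0 : 0 ≤ s) (hs : s ≤ 2)
    (hN : 0 ≤ N) (hc : 0 ≤ c) (h : N ^ t * s ≤ 2 * c) : s * N ≤ 2 * c ^ t⁻¹ := by
  have hs2 : (s / 2) ^ t ≤ s / 2 := Real.rpow_le_self_of_le_one (by positivity) (by linarith) ht
  have hpow : (s * N / 2) ^ t ≤ c := by
    rw [show s * N / 2 = s / 2 * N by ring, Real.mul_rpow (by positivity) hN]
    nlinarith [Real.rpow_nonneg hN t]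
  linarith [(Real.le_rpow_inv_iff_of_pos (by positivity) hc (by linarith)).2 hpow]

theorem le_two_mul_rpow_inv {x t : ℝ} (hx0 : 0 ≤ x) (hx : x ≤ 2) (ht : 1 ≤ t) :
    x ≤ 2 * x ^ t⁻¹ := by
  rcases le_total x 1 with h1 | h1
  · linarith [Real.self_le_rpow_of_le_one hx0 h1 (inv_le_one_of_one_le₀ ht),
      Real.rpow_nonneg hx0 t⁻¹]
  · linarith [Real.one_le_rpow h1 (inv_nonneg.2 (by linarith : (0 : ℝ) ≤ t))]

section UniformlyConvex

variable {n : ℕ} {K : Set (Euc n)} {α q : ℝ} {d d₁ d₂ x₁ x₂ : Euc n}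

theorem gauge_polarSet (hK : IsCompact K) (hne : K.Nonempty)
    (hsymm : ∀ x ∈ K, -x ∈ K) : gauge (polarSet K) = supportFn K := by
  have hpolar : polarSet K = (supportSeminorm hK hne hsymm).closedBall 0 1 := by
    ext d
    rw [Seminorm.mem_closedBall_zero, coe_supportSeminorm]
    exact ⟨supportFn_le hne, fun h x hx => (inner_le_supportFn hK hx).trans h⟩
  rw [hpolar, Seminorm.gauge_closedBall_one, coe_supportSeminorm]

theorem UniformlyConvexSet.mul_rpow_gauge_mul_supportFn_le (huc : UniformlyConvexSet K α q)
    (hK : IsCompact K) (hx₁ : x₁ ∈ K) (hx₂ : x₂ ∈ K) (hmax : ⟪d, x₁⟫_ℝ = supportFn K d) :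
    α / q * gauge K (x₁ - x₂) ^ q * supportFn K d ≤ supportFn K d - ⟪d, x₂⟫_ℝ := by
  set B := α / q * gauge K (x₁ - x₂) ^ q * supportFn K d
  have hγ : ∀ γ ∈ Set.Ico (0 : ℝ) 1, γ * B ≤ supportFn K d - ⟪d, x₂⟫_ℝ := by
    rintro γ ⟨hγ0, hγ1⟩
    have h := inner_le_supportFn (d := d) hK (huc x₁ hx₁ x₂ hx₂ x₁ hx₁ γ ⟨hγ0, hγ1.le⟩)
    simp only [inner_add_right, real_inner_smul_right, hmax] at h
    have : (1 - γ) * (γ * B) ≤ (1 - γ) * (supportFn K d - ⟪d, x₂⟫_ℝ) := by linear_combination h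
    exact le_of_mul_le_mul_left this (by linarith)
  have hlim : Tendsto (fun γ => γ * B) (𝓝[<] 1) (𝓝 B) := by
    simpa using ((tendsto_id (x := 𝓝 (1 : ℝ))).mul_const B).mono_left nhdsWithin_le_nhds
  exact le_of_tendsto hlim (eventually_of_mem (Ico_mem_nhdsLT one_pos) hγ)

theorem UniformlyConvexSet.rpow_gauge_sub_mul_le (huc : UniformlyConvexSet K α q)
    (hK : IsCompact K) (hKabs : Absorbent ℝ K) (hsymm : ∀ x ∈ K, -x ∈ K) (hα : 0 < α)
    (hq : 1 < q) (hx₁ : x₁ ∈ K) (hm₁ : ⟪d₁, x₁⟫_ℝ = supportFn K d₁) (hx₂ : x₂ ∈ K)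
    (hm₂ : ⟪d₂, x₂⟫_ℝ = supportFn K d₂) :
    gauge K (x₁ - x₂) ^ (q - 1) * (supportFn K d₁ + supportFn K d₂)
      ≤ q / α * supportFn K (d₁ - d₂) := by
  have key₁ := huc.mul_rpow_gauge_mul_supportFn_le hK hx₁ hx₂ hm₁
  have key₂ := huc.mul_rpow_gauge_mul_supportFn_le hK hx₂ hx₁ hm₂
  rw [← neg_sub, gauge_neg hsymm] at key₂
  have hpair := inner_le_supportFn_mul_gauge hK hKabs (d₁ - d₂) (x₁ - x₂)
  have hinner : ⟪d₁ - d₂, x₁ - x₂⟫_ℝ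
      = (supportFn K d₁ - ⟪d₁, x₂⟫_ℝ) + (supportFn K d₂ - ⟪d₂, x₁⟫_ℝ) := by
    rw [inner_sub_left, inner_sub_right, inner_sub_right, hm₁, hm₂]
    ring
  rcases (gauge_nonneg (x₁ - x₂)).eq_or_lt with hN | hN
  · rw [← hN, Real.zero_rpow (by linarith), zero_mul]
    exact mul_nonneg (by positivity) (supportFn_nonneg hK hKabs.zero_mem)
  · set N := gauge K (x₁ - x₂)
    have hNq : N ^ q = N ^ (q - 1) * N := by
      rw [Real.rpow_sub_one hN.ne', div_mul_cancel₀ _ hN.ne']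
    rw [hNq] at key₁ key₂
    have hsum : α / q * (N ^ (q - 1) * (supportFn K d₁ + supportFn K d₂)) * N
        ≤ supportFn K (d₁ - d₂) * N := by
      linear_combination key₁ + key₂ + hpair - hinner
    calc N ^ (q - 1) * (supportFn K d₁ + supportFn K d₂)
        = q / α * (α / q * (N ^ (q - 1) * (supportFn K d₁ + supportFn K d₂))) := by
          field_simp
      _ ≤ q / α * supportFn K (d₁ - d₂) := by
          gcongr
          exact le_of_mul_le_mul_right hsum hN

theorem UniformlyConvexSet.tendsto_of_inner_eq_supportFn (huc : UniformlyConvexSet K α q)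
    (hK : IsCompact K) (hK0 : K ∈ 𝓝 0) (hsymm : ∀ x ∈ K, -x ∈ K) (hα : 0 < α) (hq : 1 < q)
    {σ : Euc n → Euc n} (hσK : ∀ e, σ e ∈ K) (hσ : ∀ e, ⟪e, σ e⟫_ℝ = supportFn K e)
    (hd : d ≠ 0) : Tendsto σ (𝓝 d) (𝓝 (σ d)) := by
  have hKabs : Absorbent ℝ K := absorbent_nhds_zero hK0
  have hpos := supportFn_pos hK hK0 hd
  have hbound : ∀ e, gauge K (σ e - σ d) ^ (q - 1)
      ≤ q / α * supportFn K (e - d) / supportFn K d := by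
    intro e
    rw [le_div_iff₀ hpos]
    nlinarith [huc.rpow_gauge_sub_mul_le hK hKabs hsymm hα hq (hσK e) (hσ e) (hσK d) (hσ d),
      Real.rpow_nonneg (gauge_nonneg (s := K) (σ e - σ d)) (q - 1),
      supportFn_nonneg (d := e) hK hKabs.zero_mem]
  have hΔ : Tendsto (fun e => supportFn K (e - d)) (𝓝 d) (𝓝 0) :=
    ((hK.supportFn_isBigO ⟨0, hKabs.zero_mem⟩ (𝓝 0)).trans_tendsto tendsto_id).comp
      (tendsto_sub_nhds_zero_iff.2 tendsto_id)
  have hrpow : Tendsto (fun e => gauge K (σ e - σ d) ^ (q - 1)) (𝓝 d) (𝓝 0) :=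
    squeeze_zero (fun e => Real.rpow_nonneg (gauge_nonneg _) _) hbound
      (by simpa using (hΔ.const_mul (q / α)).div_const (supportFn K d))
  have hgauge : Tendsto (fun e => gauge K (σ e - σ d)) (𝓝 d) (𝓝 0) := by
    have hq' : q - 1 ≠ 0 := by linarith
    simpa [Real.rpow_rpow_inv (gauge_nonneg _) hq', Real.zero_rpow (inv_ne_zero hq')] using
      hrpow.rpow_const (p := (q - 1)⁻¹) (Or.inr (inv_nonneg.2 (by linarith)))
  rw [← tendsto_sub_nhds_zero_iff, ← comap_gauge_nhds_zero
    (NormedSpace.isVonNBounded_of_isBounded ℝ hK.isBounded) hK0, tendsto_comap_iff]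
  exact hgauge

theorem UniformlyConvexSet.gauge_smul_sub_smul_le_mul_rpow (huc : UniformlyConvexSet K α q)
    (hK : IsCompact K) (hconv : Convex ℝ K) (hKabs : Absorbent ℝ K) (hsymm : ∀ x ∈ K, -x ∈ K)
    (hα : 0 < α) (hq : 2 ≤ q) (hd₁ : d₁ ∈ polarSet K) (hd₂ : d₂ ∈ polarSet K) (hx₁ : x₁ ∈ K)
    (hm₁ : ⟪d₁, x₁⟫_ℝ = supportFn K d₁) (hx₂ : x₂ ∈ K) (hm₂ : ⟪d₂, x₂⟫_ℝ = supportFn K d₂) :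
    gauge K (supportFn K d₁ • x₁ - supportFn K d₂ • x₂)
      ≤ 2 * ((q / (2 * α)) ^ (1 / (q - 1)) + 1) * supportFn K (d₁ - d₂) ^ (1 / (q - 1)) := by
  have hne : K.Nonempty := ⟨0, hKabs.zero_mem⟩
  set p := supportSeminorm hK hne hsymm
  wlog hle : supportFn K d₂ ≤ supportFn K d₁ generalizing d₁ d₂ x₁ x₂
  · rw [← neg_sub, gauge_neg hsymm, show supportFn K (d₁ - d₂) = supportFn K (d₂ - d₁) from
      map_sub_rev p d₁ d₂]
    exact this hd₂ hd₁ hx₂ hm₂ hx₁ hm₁ (le_of_not_ge hle)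
  have h₁le : supportFn K d₁ ≤ 1 := supportFn_le hne hd₁
  have h₂le : supportFn K d₂ ≤ 1 := supportFn_le hne hd₂
  have h₂0 : 0 ≤ supportFn K d₂ := apply_nonneg p d₂
  have hΔ0 : 0 ≤ supportFn K (d₁ - d₂) := apply_nonneg p _
  have hΔle : supportFn K (d₁ - d₂) ≤ supportFn K d₁ + supportFn K d₂ := map_sub_le_add p d₁ d₂
  have hdiff : supportFn K d₁ ≤ supportFn K d₂ + supportFn K (d₁ - d₂) := by
    have h := map_add_le_add p d₂ (d₁ - d₂)
    rwa [add_sub_cancel] at h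
  have hmono := huc.rpow_gauge_sub_mul_le hK hKabs hsymm hα (by linarith) hx₁ hm₁ hx₂ hm₂
  have hN : (supportFn K d₁ + supportFn K d₂) * gauge K (x₁ - x₂)
      ≤ 2 * ((q / (2 * α)) ^ (1 / (q - 1)) * supportFn K (d₁ - d₂) ^ (1 / (q - 1))) := by
    rw [← Real.mul_rpow (by positivity) hΔ0, one_div]
    refine mul_le_two_mul_rpow_inv (by linarith) (by linarith) (by linarith) (gauge_nonneg _)
      (by positivity) ?_
    calc _ ≤ q / α * supportFn K (d₁ - d₂) := hmono
      _ = 2 * (q / (2 * α) * supportFn K (d₁ - d₂)) := by field_simp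
  have hsmall := le_two_mul_rpow_inv hΔ0 (by linarith) (by linarith : 1 ≤ q - 1)
  rw [← one_div] at hsmall
  linarith [gauge_smul_sub_smul_le hconv hKabs h₂0 hle x₁ hx₂]

end UniformlyConvex

theorem half_sq_polar_gauge_gradient_holder_general {n : ℕ}
    (K : Set (Euc n)) (hKcomp : IsCompact K) (hKconv : Convex ℝ K)
    (hKsymm : ∀ x ∈ K, -x ∈ K) (hKint : (interior K).Nonempty)
    (α q : ℝ) (hα : 0 < α) (hq : 2 ≤ q)
    (huc : UniformlyConvexSet K α q) :
    (∀ d : Euc n, DifferentiableAt ℝ (fun d => gauge (polarSet K) d ^ 2 / 2) d) ∧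
    (∀ d : Euc n, d ≠ 0 →
      gradient (fun d => gauge (polarSet K) d ^ 2 / 2) d
        = gauge (polarSet K) d • gradient (gauge (polarSet K)) d) ∧
    gradient (fun d => gauge (polarSet K) d ^ 2 / 2) (0 : Euc n) = 0 ∧
    (∀ d₁ ∈ polarSet K \ {0}, ∀ d₂ ∈ polarSet K \ {0},
      gauge K (gradient (fun d => gauge (polarSet K) d ^ 2 / 2) d₁
                - gradient (fun d => gauge (polarSet K) d ^ 2 / 2) d₂)
        ≤ 2 * ((q / (2 * α)) ^ (1 / (q - 1)) + 1)
            * gauge (polarSet K) (d₁ - d₂) ^ (1 / (q - 1))) := by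
  have hK0 : K ∈ 𝓝 0 :=
    mem_interior_iff_mem_nhds.1 (hKconv.zero_mem_interior_of_neg_mem hKsymm hKint)
  have hKabs : Absorbent ℝ K := absorbent_nhds_zero hK0
  have hne : K.Nonempty := ⟨0, hKabs.zero_mem⟩
  choose σ hσK hσ using hKcomp.exists_inner_eq_supportFn hne
  have hgrad : ∀ d ≠ 0, HasGradientAt (supportFn K) (σ d) d := fun d hd =>
    hasGradientAt_supportFn hKcomp hσK hσ
      (huc.tendsto_of_inner_eq_supportFn hKcomp hK0 hKsymm hα (by linarith) hσK hσ hd)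
  have hgrad₀ : HasGradientAt (fun d => supportFn K d ^ 2 / 2) 0 0 :=
    hasGradientAt_sq_div_two_zero (hKcomp.supportFn_isBigO hne _)
  rw [gauge_polarSet hKcomp hne hKsymm]
  refine ⟨fun d => ?_, fun d hd => ?_, hgrad₀.gradient, fun d₁ hd₁ d₂ hd₂ => ?_⟩
  · rcases eq_or_ne d 0 with rfl | hd
    · exact hgrad₀.differentiableAt
    · exact (hgrad d hd).sq_div_two.differentiableAt
  · rw [(hgrad d hd).sq_div_two.gradient, (hgrad d hd).gradient]
  · rw [(hgrad d₁ hd₁.2).sq_div_two.gradient, (hgrad d₂ hd₂.2).sq_div_two.gradient]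
    exact huc.gauge_smul_sub_smul_le_mul_rpow hKcomp hKconv hKabs hKsymm hα hq hd₁.1 hd₂.1
      (hσK d₁) (hσ d₁) (hσK d₂) (hσ d₂)

/-- For a smooth `(α,q)`-uniformly convex set `K`, the function
`½‖·‖²_{K°}` is differentiable on all of `ℝⁿ`, with gradient `‖d‖_{K°}·∇‖·‖_{K°}(d)` for
`d ≠ 0` and `0` at `0`, and its gradient is `(1/(q-1))`-Hölder on `K° \ {0}` with constant
`2(C + 1)`, `C = (q/(2α))^{1/(q-1)}`. -/
theorem half_sq_polar_gauge_gradient_holder {n : ℕ}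
    (K : Set (Euc n)) (hKcomp : IsCompact K) (hKconv : Convex ℝ K)
    (hKsymm : ∀ x ∈ K, -x ∈ K) (hKint : (interior K).Nonempty)
    (hsmooth : SmoothSet K)
    (α q : ℝ) (hα : 0 < α) (hq : 2 ≤ q)
    (huc : UniformlyConvexSet K α q) :
    (∀ d : Euc n, DifferentiableAt ℝ (fun d => gauge (polarSet K) d ^ 2 / 2) d) ∧
    (∀ d : Euc n, d ≠ 0 →
      gradient (fun d => gauge (polarSet K) d ^ 2 / 2) d
        = gauge (polarSet K) d • gradient (gauge (polarSet K)) d) ∧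
    gradient (fun d => gauge (polarSet K) d ^ 2 / 2) (0 : Euc n) = 0 ∧
    (∀ d₁ ∈ polarSet K \ {0}, ∀ d₂ ∈ polarSet K \ {0},
      gauge K (gradient (fun d => gauge (polarSet K) d ^ 2 / 2) d₁
                - gradient (fun d => gauge (polarSet K) d ^ 2 / 2) d₂)
        ≤ 2 * ((q / (2 * α)) ^ (1 / (q - 1)) + 1)
            * gauge (polarSet K) (d₁ - d₂) ^ (1 / (q - 1))) :=
  half_sq_polar_gauge_gradient_holder_general K hKcomp hKconv hKsymm hKint α q hα hq huc
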